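/- arXiv:2407.09090 — 6 statements merged into one kernel-verified Lean document; each statement's English description precedes it below -/
import Mathlib

section
/- For any compact Hausdorff space K, if the Alexandroff duplicate AD(K) is semi-Eberlein, then K is Corson compact. -/
open Topology Set

universe u v

/-- A space is *M-scattered* if every nonempty subspace contains a nonempty
relatively open second-countable subset. -/
def MScattered (X : Type*) [TopologicalSpace X] : Prop :=
  ∀ A : Set X, A.Nonempty → ∃ U : Set X, IsOpen U ∧ (A ∩ U).Nonempty ∧
    SecondCountableTopology ↥(A ∩ U)

/-- Corson compact: embeds into the Σ-product of copies of `[0,1]`. -/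
def CorsonCompact (K : Type u) [TopologicalSpace K] : Prop :=
  ∃ (Γ : Type u) (f : K → Γ → unitInterval),
    Topology.IsEmbedding f ∧ ∀ k, {γ | f k γ ≠ 0}.Countable

/-- Eberlein compact: embeds into `c₀(Γ)`. -/
def EberleinCompact (K : Type u) [TopologicalSpace K] : Prop :=
  ∃ (Γ : Type u) (f : K → Γ → unitInterval),
    Topology.IsEmbedding f ∧ ∀ k, ∀ ε : ℝ, 0 < ε → {γ | ε < (f k γ : ℝ)}.Finite

/-- NY compact: embeds into a σ-product of compact metrizable spaces. -/
def NYCompact (K : Type u) [TopologicalSpace K] : Prop :=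
  ∃ (Γ : Type u) (X : Γ → Type u) (t : ∀ γ, TopologicalSpace (X γ)),
    (∀ γ, @CompactSpace (X γ) (t γ)) ∧
    (∀ γ, @TopologicalSpace.MetrizableSpace (X γ) (t γ)) ∧
    ∃ (a : ∀ γ, X γ) (f : K → ∀ γ, X γ),
      @Topology.IsEmbedding K (∀ γ, X γ) _ (@Pi.topologicalSpace Γ X t) f ∧
      ∀ k, {γ | f k γ ≠ a γ}.Finite

/-- ω-Corson compact: embeds into the σ-product of copies of `[0,1]`. -/
def OmegaCorson (K : Type u) [TopologicalSpace K] : Prop :=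
  ∃ (Γ : Type u) (f : K → Γ → unitInterval),
    Topology.IsEmbedding f ∧ ∀ k, {γ | f k γ ≠ 0}.Finite

/-- Semi-Eberlein: embeds into `[0,1]^Γ` with `h(K) ∩ c₀(Γ)` dense in `h(K)`. -/
def SemiEberlein (K : Type u) [TopologicalSpace K] : Prop :=
  ∃ (Γ : Type u) (h : K → Γ → unitInterval), Topology.IsEmbedding h ∧
    Set.range h ⊆
      closure (Set.range h ∩ {x | ∀ ε : ℝ, 0 < ε → {γ | ε < (x γ : ℝ)}.Finite})

/-- ω-Valdivia: embeds into `[0,1]^Γ` with `h(K) ∩ σ([0,1]^Γ)` dense in `h(K)`. -/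
def OmegaValdivia (K : Type u) [TopologicalSpace K] : Prop :=
  ∃ (Γ : Type u) (h : K → Γ → unitInterval), Topology.IsEmbedding h ∧
    Set.range h ⊆ closure (Set.range h ∩ {x | {γ | x γ ≠ 0}.Finite})

/-- NY-Valdivia: embeds into a product of Hilbert cubes with the σ-product trace dense. -/
def NYValdivia (K : Type u) [TopologicalSpace K] : Prop :=
  ∃ (Γ : Type u) (h : K → Γ → ℕ → unitInterval), Topology.IsEmbedding h ∧
    Set.range h ⊆ closure (Set.range h ∩ {x | {γ | x γ ≠ 0}.Finite})

/-- The topology of the Alexandroff duplicate on `X × Bool`: points `(x, true)` are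
isolated, and basic neighborhoods of `(x, false)` are `(U × Bool) \ {(x, true)}`. -/
def adTopology (X : Type*) [TopologicalSpace X] : TopologicalSpace (X × Bool) where
  IsOpen V := ∀ x : X, (x, false) ∈ V →
    ∃ U : Set X, IsOpen U ∧ x ∈ U ∧ {p : X × Bool | p.1 ∈ U ∧ p ≠ (x, true)} ⊆ V
  isOpen_univ := fun x _ => ⟨Set.univ, isOpen_univ, trivial, fun _ _ => trivial⟩
  isOpen_inter := by
    intro V W hV hW x hx
    obtain ⟨U1, hU1, hx1, hs1⟩ := hV x hx.1
    obtain ⟨U2, hU2, hx2, hs2⟩ := hW x hx.2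
    exact ⟨U1 ∩ U2, hU1.inter hU2, ⟨hx1, hx2⟩,
      fun p hp => ⟨hs1 ⟨hp.1.1, hp.2⟩, hs2 ⟨hp.1.2, hp.2⟩⟩⟩
  isOpen_sUnion := by
    intro S hS x hx
    obtain ⟨V, hVS, hxV⟩ := hx
    obtain ⟨U, hU, hxU, hsub⟩ := hS V hVS x hxV
    exact ⟨U, hU, hxU, fun p hp => ⟨V, hVS, hsub hp⟩⟩

/-- A space is metalindelöf if every open cover has a point-countable open refinement. -/
def Metalindelof (X : Type*) [TopologicalSpace X] : Prop :=
  ∀ 𝒰 : Set (Set X), (∀ U ∈ 𝒰, IsOpen U) → ⋃₀ 𝒰 = Set.univ →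
    ∃ 𝒱 : Set (Set X), (∀ V ∈ 𝒱, IsOpen V) ∧ ⋃₀ 𝒱 = Set.univ ∧
      (∀ V ∈ 𝒱, ∃ U ∈ 𝒰, V ⊆ U) ∧ ∀ x : X, {V ∈ 𝒱 | x ∈ V}.Countable

/-- Hereditarily metalindelöf: every subspace is metalindelöf. -/
def HereditarilyMetalindelof (X : Type*) [TopologicalSpace X] : Prop :=
  ∀ A : Set X, Metalindelof ↥A

/-!
The c₀-trace of a semi-Eberlein embedding `H` of `AD(K)` is dense, so it contains the image of
every isolated point, in particular every `H (x, 1)`. Fix `x` and `ε > 0` and let `A` be the set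
of coordinates where `H (x, 0)` exceeds `ε`; if `x` is isolated, so is `(x, 0)`, and `A` is finite.
Otherwise, since `(y, 1) → (x, 0)` as `y → x` with `y ≠ x`, every `γ ∈ A` exceeds `ε` at `H (y, 1)`
for all `y ≠ x` near `x`, while each `H (y, 1)` does so only at finitely many `γ`. If `A` is
infinite, countably many of these punctured neighbourhoods already have empty intersection, so `x`
is a `G_δ` point of the compact space `K` and has a countable neighbourhood base; a sequence
`yₙ → x` with `yₙ ≠ x` then covers `A` by the countably many finite sets `{γ | ε < H (yₙ, 1) γ}`.
Hence `x ↦ H (x, 0)` embeds `K` into the Σ-product.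
-/

open Filter

def AlexandroffDuplicate (X : Type*) : Type _ := X × Bool

namespace AlexandroffDuplicate

variable {X : Type*}

-- `base x` is the point `(x, 0)` of the paper and `copy x` the isolated point `(x, 1)`.
def base (x : X) : AlexandroffDuplicate X := (x, false)

def copy (x : X) : AlexandroffDuplicate X := (x, true)

theorem base_injective : Function.Injective (base : X → AlexandroffDuplicate X) :=
  fun _ _ h => congrArg Prod.fst h

theorem base_ne_copy (x y : X) : base x ≠ copy y :=
  fun h => Bool.false_ne_true (congrArg Prod.snd h)

variable [TopologicalSpace X]

instance : TopologicalSpace (AlexandroffDuplicate X) := adTopology X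

theorem isOpen_iff {V : Set (AlexandroffDuplicate X)} :
    IsOpen V ↔ ∀ x, base x ∈ V →
      ∃ U : Set X, IsOpen U ∧ x ∈ U ∧ ∀ y ∈ U, base y ∈ V ∧ (y ≠ x → copy y ∈ V) := by
  refine forall₂_congr fun x _ => exists_congr fun U => and_congr_right fun _ =>
    and_congr_right fun _ => ⟨fun h y hy => ⟨h ⟨hy, base_ne_copy y x⟩, fun hyx => h ⟨hy, ?_⟩⟩, ?_⟩
  · exact fun hxy => hyx (congrArg Prod.fst hxy)
  · rintro h ⟨y, (_ | _)⟩ ⟨hy, hyx⟩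
    · exact (h y hy).1
    · exact (h y hy).2 fun hxy => hyx (by rw [hxy])

theorem isOpen_singleton_copy (y : X) : IsOpen {copy y} :=
  isOpen_iff.2 fun x hx => absurd (mem_singleton_iff.1 hx) (base_ne_copy x y)

theorem isOpen_singleton_base {x : X} (hx : IsOpen {x}) : IsOpen {base x} := by
  refine isOpen_iff.2 fun x' hx' => ?_
  obtain rfl := base_injective (mem_singleton_iff.1 hx')
  exact ⟨{x'}, hx, rfl, fun y hy => by simp_all⟩

theorem continuous_fst : Continuous fun p : AlexandroffDuplicate X => (p : X × Bool).1 :=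
  ⟨fun U hU => isOpen_iff.2 fun _ hx => ⟨U, hU, hx, fun _ hy => ⟨hy, fun _ => hy⟩⟩⟩

theorem isEmbedding_base : IsEmbedding (base : X → AlexandroffDuplicate X) := by
  refine Function.LeftInverse.isEmbedding (fun _ => rfl) continuous_fst
    ⟨fun V hV => isOpen_iff_forall_mem_open.2 fun x hx => ?_⟩
  obtain ⟨U, hU, hxU, hUV⟩ := isOpen_iff.1 hV x hx
  exact ⟨U, fun y hy => (hUV y hy).1, hU, hxU⟩

theorem tendsto_copy_nhdsNE (x : X) : Tendsto copy (𝓝[≠] x) (𝓝 (base x)) := by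
  refine tendsto_nhds.2 fun V hV hxV => ?_
  obtain ⟨U, hU, hxU, hUV⟩ := isOpen_iff.1 hV x hxV
  exact mem_nhdsWithin.2 ⟨U, hU, hxU, fun y ⟨hyU, hyx⟩ => (hUV y hyU).2 hyx⟩

end AlexandroffDuplicate

theorem Topology.IsInducing.apply_mem_of_isOpen_singleton {X Y : Type*} [TopologicalSpace X]
    [TopologicalSpace Y] {h : X → Y} (hh : IsInducing h) {C : Set Y}
    (hC : range h ⊆ closure (range h ∩ C)) {p : X} (hp : IsOpen {p}) : h p ∈ C := by
  have hdense : Dense (h ⁻¹' C) := fun q => by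
    rw [hh.closure_eq_preimage_closure_image, image_preimage_eq_range_inter]
    exact hC (mem_range_self q)
  obtain ⟨q, hq, rfl⟩ := hdense.exists_mem_open hp ⟨p, rfl⟩
  exact hq

theorem IsGδ.isCountablyGenerated_nhds {X : Type*} [TopologicalSpace X] [CompactSpace X]
    [RegularSpace X] {x : X} (hx : IsGδ {x}) : (𝓝 x).IsCountablyGenerated := by
  obtain ⟨T, hTo, hTc, hxT⟩ := hx
  have hxt : ∀ t : T, t.1 ∈ 𝓝 x := fun t =>
    (hTo t t.2).mem_nhds (mem_sInter.1 (hxT ▸ mem_singleton x) t t.2)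
  choose c hc hct using fun t : T => (closed_nhds_basis x).mem_iff.1 (hxt t)
  have : Countable T := hTc.to_subtype
  suffices 𝓝 x = ⨅ t : T, 𝓟 (c t) from this ▸ inferInstance
  refine le_antisymm (le_iInf fun t => le_principal_iff.2 (hc t).1) fun U hU => ?_
  -- by compactness, since `⋂ t, c t = {x}`, some finite intersection of the `c t` lies in `U`
  obtain ⟨s, hs⟩ := exists_subset_nhds_of_compactSpace (V := fun s : Finset T => ⋂ t ∈ s, c t)
    (directed_of_isDirected_le fun s s' hss' => biInter_subset_biInter_left hss')
    (fun s => isClosed_biInter fun t _ => (hc t).2) (U := U) fun y hy => by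
      have : y ∈ ⋂₀ T := mem_sInter.2 fun t ht =>
        hct ⟨t, ht⟩ <|
          mem_iInter₂.1 (mem_iInter.1 hy {⟨t, ht⟩}) ⟨t, ht⟩ (Finset.mem_singleton_self _)
      rw [← hxT, mem_singleton_iff] at this
      exact this ▸ hU
  exact mem_of_superset
    ((biInter_finset_mem s).2 fun t _ => mem_iInf_of_mem t (mem_principal_self _)) hs

section PointFiniteFamilies

variable {X ι : Type*} [TopologicalSpace X] {x : X} {S : X → Set ι} {A : Set ι}

theorem isGδ_singleton_of_eventually_mem (hS : ∀ y, (S y).Finite) (hA : A.Infinite)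
    (hAS : ∀ i ∈ A, ∀ᶠ y in 𝓝[≠] x, i ∈ S y) : IsGδ {x} := by
  let e := hA.natEmbedding
  let W : ℕ → Set X := fun n => interior (insert x {y | (e n : ι) ∈ S y})
  suffices {x} = ⋂ n, W n from this ▸ IsGδ.iInter_of_isOpen fun n => isOpen_interior
  refine Subset.antisymm (fun _ hx => mem_iInter.2 fun n => ?_) fun y hy => ?_
  · exact mem_singleton_iff.1 hx ▸
      mem_interior_iff_mem_nhds.2 (insert_mem_nhds_iff.2 (hAS _ (e n).2))
  by_contra hyx
  have hmem : ∀ n, (e n : ι) ∈ S y := fun n =>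
    ((interior_subset (mem_iInter.1 hy n)).resolve_left hyx :)
  exact infinite_range_of_injective (Subtype.val_injective.comp e.injective)
    |>.mono (range_subset_iff.2 hmem) (hS y)

theorem countable_of_eventually_mem [CompactSpace X] [RegularSpace X] [(𝓝[≠] x).NeBot]
    (hS : ∀ y, (S y).Finite) (hAS : ∀ i ∈ A, ∀ᶠ y in 𝓝[≠] x, i ∈ S y) : A.Countable := by
  rcases A.finite_or_infinite with hA | hA
  · exact hA.countable
  have := (isGδ_singleton_of_eventually_mem hS hA hAS).isCountablyGenerated_nhds
  obtain ⟨u, hu⟩ := (𝓝[≠] x).exists_seq_tendsto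
  have hAu : A ⊆ ⋃ n, S (u n) := fun i hi => mem_iUnion.2 (hu.eventually (hAS i hi)).exists
  exact (countable_iUnion fun n => (hS (u n)).countable).mono hAu

end PointFiniteFamilies

theorem unitInterval.countable_ne_zero {Γ : Type*} {f : Γ → unitInterval}
    (hf : ∀ ε : ℝ, 0 < ε → {γ | ε < (f γ : ℝ)}.Countable) : {γ | f γ ≠ 0}.Countable := by
  refine (countable_iUnion fun n : ℕ => hf (1 / (n + 1)) Nat.one_div_pos_of_nat).mono
    fun γ hγ => mem_iUnion.2 <|
      exists_nat_one_div_lt ((f γ).2.1.lt_of_ne' (unitInterval.coe_ne_zero.2 hγ))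

/-- if the Alexandroff duplicate of a compact Hausdorff space is
semi-Eberlein, then the space is Corson compact. -/
theorem corson_of_AD_semiEberlein
    (K : Type u) [TopologicalSpace K] [CompactSpace K] [T2Space K]
    (h : @SemiEberlein (K × Bool) (adTopology K)) :
    CorsonCompact K := by
  obtain ⟨Γ, H, hH, hdense⟩ : SemiEberlein (AlexandroffDuplicate K) := h
  have hc0 {p : AlexandroffDuplicate K} (hp : IsOpen {p}) (ε : ℝ) (hε : 0 < ε) :
      {γ | ε < (H p γ : ℝ)}.Finite :=
    hH.isInducing.apply_mem_of_isOpen_singleton hdense hp ε hε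
  refine ⟨Γ, H ∘ AlexandroffDuplicate.base, hH.comp AlexandroffDuplicate.isEmbedding_base,
    fun x => unitInterval.countable_ne_zero ?_⟩
  intro ε hε
  by_cases hx : IsOpen {x}
  · exact (hc0 (AlexandroffDuplicate.isOpen_singleton_base hx) ε hε).countable
  have : (𝓝[≠] x).NeBot := by rwa [neBot_iff, ne_eq, ← isOpen_singleton_iff_punctured_nhds]
  refine countable_of_eventually_mem (x := x)
    (fun y => hc0 (AlexandroffDuplicate.isOpen_singleton_copy y) ε hε) fun γ hγ => ?_
  have hγ_cont : Continuous fun p => (H p γ : ℝ) :=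
    continuous_subtype_val.comp ((continuous_apply γ).comp hH.continuous)
  exact ((hγ_cont.tendsto _).comp (AlexandroffDuplicate.tendsto_copy_nhdsNE x)).eventually
    (lt_mem_nhds hγ)
end

section
/- For any compact Hausdorff space K the following conditions are equivalent: (i) K is ω-Corson; (ii) the Alexandroff duplicate AD(K) is ω-Corson; (iii) the Alexandroff duplicate AD(K) is ω-Valdivia. -/
open Topology Set

universe u v

/-!
If `h` embeds `AD(K)` into `[0,1]^Γ` with dense σ-product trace, the isolated points `(x, 1)`
lie in the σ-product, so `s γ x := h (x, 1) γ` has finite support in `γ`, while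
`f γ x := h (x, 0) γ` embeds `K` and `s γ y → f γ x` as `y → x`, `y ≠ x`. Hence, by compactness,
for each `γ` and each scale `n` only finitely many points `z` have `|s γ z - f γ z| ≥ 2^(-n-1)`;
call such a `z` bad if `f · z` has infinite support. Bad points are `G_δ`, and near a bad point
the number of nonzero `s γ y` tends to infinity.

Cut each `f γ` into the dyadic pieces `tent n ∘ f γ`, and cut each piece into countably many
slices vanishing at the finitely many bad points of scale `n`. At a point `x` of infinite support
which is not bad at `(γ, n)`, a nonzero piece forces `s γ x ≠ 0`, so only finitely many slices
are nonzero at `x`. Each bad point `z` gets private coordinates, supported where `s` has more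
nonzero coordinates than at the other bad points of its scale. Together these form a point-finite
family of continuous maps `K → [0,1]` separating points, that is, an embedding of `K` into a
σ-product.
-/

open Filter

structure IsPointFiniteFamily {ι X : Type*} [TopologicalSpace X] (φ : ι → X → ℝ) : Prop where
  continuous : ∀ i, Continuous (φ i)
  mem_Icc : ∀ i x, φ i x ∈ Icc (0 : ℝ) 1
  finite_ne_zero : ∀ x, {i | φ i x ≠ 0}.Finite

namespace IsPointFiniteFamily

variable {ι κ X : Type*} [TopologicalSpace X] {φ : ι → X → ℝ} {ψ : κ → X → ℝ}

theorem sumElim (hφ : IsPointFiniteFamily φ) (hψ : IsPointFiniteFamily ψ) :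
    IsPointFiniteFamily (Sum.elim φ ψ) where
  continuous := Sum.rec hφ.continuous hψ.continuous
  mem_Icc := Sum.rec hφ.mem_Icc hψ.mem_Icc
  finite_ne_zero x := by
    refine (((hφ.finite_ne_zero x).image Sum.inl).union
      ((hψ.finite_ne_zero x).image Sum.inr)).subset ?_
    rintro (i | k) h
    · exact Or.inl ⟨i, h, rfl⟩
    · exact Or.inr ⟨k, h, rfl⟩

theorem omegaCorson {K Λ : Type u} [TopologicalSpace K] [CompactSpace K] {φ : Λ → K → ℝ}
    (hφ : IsPointFiniteFamily φ) (hsep : ∀ x y, (∀ l, φ l x = φ l y) → x = y) :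
    OmegaCorson K := by
  let e : K → Λ → unitInterval := fun x l => ⟨φ l x, hφ.mem_Icc l x⟩
  have he : Continuous e := continuous_pi fun l => (hφ.continuous l).subtype_mk _
  refine ⟨Λ, e, (he.isClosedEmbedding fun x y hxy => hsep x y fun l => ?_).isEmbedding,
    fun x => (hφ.finite_ne_zero x).subset fun l hl h0 => hl (Subtype.ext h0)⟩
  exact congrArg Subtype.val (congrFun hxy l)

end IsPointFiniteFamily

theorem OmegaCorson.of_isEmbedding {X Y : Type u} [TopologicalSpace X] [TopologicalSpace Y]
    {e : X → Y} (he : IsEmbedding e) (hY : OmegaCorson Y) : OmegaCorson X := by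
  obtain ⟨Γ, g, hg, hfin⟩ := hY
  exact ⟨Γ, g ∘ e, hg.comp he, fun x => hfin (e x)⟩

theorem Set.finite_of_forall_eventually_nhdsNE_notMem {X : Type*} [TopologicalSpace X]
    [CompactSpace X] {S : Set X} (h : ∀ x, ∀ᶠ y in 𝓝[≠] x, y ∉ S) : S.Finite := by
  have : Sᶜ ∈ codiscrete X :=
    mem_codiscrete.2 fun x => disjoint_principal_right.2 (by rw [compl_compl]; exact h x)
  simpa using cofinite_le_codiscrete this

theorem IsGδ.exists_continuous_eq_zero_iff {X : Type*} [TopologicalSpace X] [RegularSpace X]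
    [LocallyCompactSpace X] {S : Set X} (hGδ : IsGδ S) (hS : IsCompact S) :
    ∃ g : X → ℝ, Continuous g ∧ (∀ x, 0 ≤ g x) ∧ ∀ x, g x = 0 ↔ x ∈ S := by
  obtain ⟨h, hS1, -, -, hmem⟩ :=
    exists_continuous_one_zero_of_isCompact_of_isGδ hS hGδ isClosed_empty (disjoint_empty S)
  refine ⟨fun x => 1 - h x, by fun_prop, fun x => sub_nonneg.2 (hmem x).2, fun x => ?_⟩
  rw [hS1, sub_eq_zero, eq_comm]
  rfl

theorem Topology.IsEmbedding.mem_of_mem_closure_of_isOpen_singleton {X Y : Type*}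
    [TopologicalSpace X] [TopologicalSpace Y] {e : X → Y} (he : IsEmbedding e) {p : X}
    (hp : IsOpen {p}) {T : Set Y} (h : e p ∈ closure (range e ∩ T)) : e p ∈ T := by
  obtain ⟨W, hW, hWp⟩ := he.isInducing.isOpen_iff.1 hp
  have hpW : e p ∈ W := by
    change p ∈ e ⁻¹' W
    rw [hWp]
    rfl
  obtain ⟨_, hvW, ⟨q, rfl⟩, hqT⟩ := mem_closure_iff.1 h W hW hpW
  have : q ∈ e ⁻¹' W := hvW
  rw [hWp, mem_singleton_iff] at this
  exact this ▸ hqT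

theorem OmegaCorson.omegaValdivia {X : Type u} [TopologicalSpace X] (hX : OmegaCorson X) :
    OmegaValdivia X := by
  obtain ⟨Γ, e, he, hfin⟩ := hX
  refine ⟨Γ, e, he, ?_⟩
  rw [inter_eq_left.2 (range_subset_iff.2 hfin : range e ⊆ {x | {γ | x γ ≠ 0}.Finite})]
  exact subset_closure

namespace adTopology

variable {X : Type*} [TopologicalSpace X]

theorem continuous_fst : Continuous[adTopology X, _] Prod.fst :=
  continuous_def.2 fun U hU _ hx => ⟨U, hU, hx, fun _ hp => hp.1⟩

theorem continuous_mk_false : Continuous[_, adTopology X] fun x => (x, false) := by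
  refine continuous_def.2 fun V hV => isOpen_iff_mem_nhds.2 fun x hx => ?_
  obtain ⟨U, hU, hxU, hsub⟩ := hV x hx
  filter_upwards [hU.mem_nhds hxU] with y hy
  exact hsub ⟨hy, by simp⟩

theorem isEmbedding_mk_false :
    @IsEmbedding X (X × Bool) _ (adTopology X) fun x => (x, false) := by
  let := adTopology X
  exact ⟨.of_comp continuous_mk_false continuous_fst .id, fun _ _ h => congrArg Prod.fst h⟩

theorem isOpen_singleton_true (x : X) : IsOpen[adTopology X] {(x, true)} := by
  rintro y hy
  simp at hy

theorem isClopen_singleton_true [T1Space X] (x : X) :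
    @IsClopen (X × Bool) (adTopology X) {(x, true)} := by
  refine ⟨?_, isOpen_singleton_true x⟩
  rw [← @isOpen_compl_iff]
  intro y _
  by_cases hyx : y = x
  · exact ⟨univ, isOpen_univ, trivial, fun p hp => hyx ▸ hp.2⟩
  · exact ⟨{x}ᶜ, isOpen_compl_singleton, hyx,
      fun p hp hpx => hp.1 (by rw [mem_singleton_iff.1 hpx]; rfl)⟩

theorem tendsto_mk_true (x : X) :
    Tendsto (fun y => (y, true)) (𝓝[≠] x) (@nhds _ (adTopology X) (x, false)) := by
  let := adTopology X
  refine tendsto_nhds.2 fun V hV hxV => ?_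
  obtain ⟨U, hU, hxU, hsub⟩ := hV x hxV
  filter_upwards [inter_mem_nhdsWithin _ (hU.mem_nhds hxU)] with y ⟨hyx, hyU⟩
  exact hsub ⟨hyU, fun h => hyx (congrArg Prod.fst h)⟩

theorem compactSpace [CompactSpace X] : @CompactSpace (X × Bool) (adTopology X) := by
  classical
  let := adTopology X
  refine ⟨isCompact_iff_finite_subcover.2 fun W hW hcover => ?_⟩
  choose i hi using fun x : X => mem_iUnion.1 (hcover (mem_univ (x, false)))
  choose j hj using fun x : X => mem_iUnion.1 (hcover (mem_univ (x, true)))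
  choose U hU hxU hUW using fun x => hW (i x) x (hi x)
  obtain ⟨t, ht⟩ := isCompact_univ.elim_finite_subcover U hU fun x _ => mem_iUnion.2 ⟨x, hxU x⟩
  refine ⟨t.image i ∪ t.image j, fun p _ => ?_⟩
  obtain ⟨x, hxt, hpx⟩ := mem_iUnion₂.1 (ht (mem_univ p.1))
  by_cases hp : p = (x, true)
  · exact mem_iUnion₂.2 ⟨j x, Finset.mem_union_right _ (Finset.mem_image_of_mem j hxt), hp ▸ hj x⟩
  · exact mem_iUnion₂.2 ⟨i x, Finset.mem_union_left _ (Finset.mem_image_of_mem i hxt),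
      hUW x ⟨hpx, hp⟩⟩

end adTopology

-- `hat` rises from `0` at `1/2` to `1` at `1` and falls back to `0` at `2`; `tent n` is its
-- rescaling to `[2^(-n-1), 2^(-n+1)]`.
noncomputable def hat (a : ℝ) : ℝ := max 0 (min (2 * a - 1) (2 - a))

noncomputable def tent (n : ℕ) (t : ℝ) : ℝ := hat (2 ^ n * t)

theorem continuous_hat : Continuous hat := by
  unfold hat; fun_prop

theorem hat_mem_Icc (a : ℝ) : hat a ∈ Icc (0 : ℝ) 1 := by
  unfold hat
  constructor
  · exact le_max_left _ _
  · apply max_le zero_le_one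
    rcases le_total a 1 with h | h
    · exact (min_le_left _ _).trans (by linarith)
    · exact (min_le_right _ _).trans (by linarith)

theorem hat_ne_zero {a : ℝ} (h : hat a ≠ 0) : 1 < 2 * a ∧ a < 2 := by
  by_contra! hc
  apply h
  unfold hat
  apply max_eq_left
  by_cases h1 : 1 < 2 * a
  · exact (min_le_right _ _).trans (by linarith [hc h1])
  · exact (min_le_left _ _).trans (by linarith)

theorem hat_of_mem_Icc {a : ℝ} (h₁ : 1 ≤ 2 * a) (h₂ : a ≤ 1) :
    hat a = 2 * a - 1 ∧ hat (2 * a) = 2 - 2 * a := by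
  unfold hat
  constructor
  · rw [min_eq_left (by linarith), max_eq_right (by linarith)]
  · rw [min_eq_right (by linarith), max_eq_right (by linarith)]

theorem mem_window_of_hat_add_hat {a : ℝ} (h : hat a + hat (2 * a) = 1) :
    1 ≤ 2 * a ∧ a ≤ 1 := by
  by_contra! hc
  unfold hat at h
  have := min_le_left (2 * a - 1) (2 - a)
  have := min_le_right (2 * a - 1) (2 - a)
  have := min_le_left (2 * (2 * a) - 1) (2 - 2 * a)
  have := min_le_right (2 * (2 * a) - 1) (2 - 2 * a)
  by_cases ha : 1 ≤ 2 * a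
  · have := hc ha
    rcases max_cases (0 : ℝ) (min (2 * a - 1) (2 - a)) with ⟨h₁, -⟩ | ⟨h₁, -⟩ <;>
    rcases max_cases (0 : ℝ) (min (2 * (2 * a) - 1) (2 - 2 * a)) with ⟨h₂, -⟩ | ⟨h₂, -⟩ <;>
    linarith
  · rcases max_cases (0 : ℝ) (min (2 * a - 1) (2 - a)) with ⟨h₁, -⟩ | ⟨h₁, -⟩ <;>
    rcases max_cases (0 : ℝ) (min (2 * (2 * a) - 1) (2 - 2 * a)) with ⟨h₂, -⟩ | ⟨h₂, -⟩ <;>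
    linarith

theorem continuous_tent (n : ℕ) : Continuous (tent n) :=
  continuous_hat.comp (continuous_const.mul continuous_id)

theorem tent_mem_Icc (n : ℕ) (t : ℝ) : tent n t ∈ Icc (0 : ℝ) 1 := hat_mem_Icc _

theorem tent_zero_right (n : ℕ) : tent n 0 = 0 := by
  simp [tent, hat]

theorem tent_succ (n : ℕ) (t : ℝ) : tent (n + 1) t = hat (2 * (2 ^ n * t)) := by
  rw [tent, pow_succ]; ring_nf

theorem inv_lt_of_tent_ne_zero {n : ℕ} {t : ℝ} (h : tent n t ≠ 0) : ((2 : ℝ) ^ (n + 1))⁻¹ < t := by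
  have := (hat_ne_zero h).1
  rw [inv_lt_iff_one_lt_mul₀ (by positivity), pow_succ]
  linarith

theorem finite_tent_ne_zero (t : ℝ) : {n | tent n t ≠ 0}.Finite := by
  rcases le_or_gt t 0 with ht | ht
  · refine Set.finite_empty.subset fun n hn => ?_
    have := (hat_ne_zero hn).1
    nlinarith [pow_pos (two_pos : (0 : ℝ) < 2) n]
  · have : ∀ᶠ n in atTop, 2 < (2 : ℝ) ^ n * t :=
      ((tendsto_pow_atTop_atTop_of_one_lt one_lt_two).atTop_mul_const ht).eventually_gt_atTop 2
    rw [← Nat.cofinite_eq_atTop] at this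
    refine eventually_cofinite.1 (this.mono fun n hn => ?_)
    by_contra hne
    exact lt_asymm hn (hat_ne_zero hne).2

theorem eq_of_forall_tent_eq_of_pos {t t' : ℝ} (ht : 0 < t) (ht₁ : t ≤ 1)
    (h : ∀ n, tent n t = tent n t') : t = t' := by
  -- `2^n t` lies in the window `[1/2, 1]`, the only place where `hat + hat (2 ·) = 1`;
  -- so `2^n t'` lies there too, and there `hat` is injective.
  obtain ⟨n, hn, hn'⟩ := exists_nat_pow_near (one_le_inv_iff₀.2 ⟨ht, ht₁⟩) one_lt_two
  have hw : 1 ≤ 2 * (2 ^ n * t) ∧ 2 ^ n * t ≤ 1 := by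
    constructor
    · have := (inv_lt_iff_one_lt_mul₀ ht).1 hn'
      rw [pow_succ] at this
      linarith
    · calc 2 ^ n * t ≤ 2 ^ n * (2 ^ n)⁻¹ := by gcongr; exact (le_inv_comm₀ (by positivity) ht).1 hn
        _ = 1 := mul_inv_cancel₀ (by positivity)
  have hw' := mem_window_of_hat_add_hat (a := 2 ^ n * t') <| by
    rw [← tent, ← tent_succ, ← h, ← h, tent_succ, tent, (hat_of_mem_Icc hw.1 hw.2).1,
      (hat_of_mem_Icc hw.1 hw.2).2]
    ring
  have := h n
  rw [tent, tent, (hat_of_mem_Icc hw.1 hw.2).1, (hat_of_mem_Icc hw'.1 hw'.2).1] at this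
  exact mul_left_cancel₀ (by positivity) (by linarith : (2 : ℝ) ^ n * t = 2 ^ n * t')

theorem eq_of_forall_tent_eq {t t' : ℝ} (ht : t ∈ Icc (0 : ℝ) 1) (ht' : t' ∈ Icc (0 : ℝ) 1)
    (h : ∀ n, tent n t = tent n t') : t = t' := by
  rcases ht.1.eq_or_lt with rfl | hpos
  · rcases ht'.1.eq_or_lt with rfl | hpos'
    · rfl
    · exact (eq_of_forall_tent_eq_of_pos hpos' ht'.2 fun n => (h n).symm).symm
  · exact eq_of_forall_tent_eq_of_pos hpos ht.2 h

noncomputable def ramp (m : ℕ) (a : ℝ) : ℝ := min 1 (m * a)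

-- The slices of `t` along `a` split `t` into countably many pieces, finitely many of them nonzero
-- at each point, all vanishing where `a = 0` and summing to `t` where `a > 0`.
noncomputable def slice (m : ℕ) (t a : ℝ) : ℝ := min t (ramp (m + 1) a) - min t (ramp m a)

section Slice

variable {a t : ℝ}

theorem ramp_zero_left (a : ℝ) : ramp 0 a = 0 := by simp [ramp]

theorem ramp_zero_right (m : ℕ) : ramp m 0 = 0 := by simp [ramp]

theorem ramp_nonneg (ha : 0 ≤ a) (m : ℕ) : 0 ≤ ramp m a :=
  le_min zero_le_one (by positivity)

theorem ramp_le_succ (ha : 0 ≤ a) (m : ℕ) : ramp m a ≤ ramp (m + 1) a := by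
  unfold ramp; gcongr; linarith

theorem eventually_ramp_eq_one (ha : 0 < a) : ∀ᶠ m in atTop, ramp m a = 1 := by
  filter_upwards [eventually_ge_atTop ⌈a⁻¹⌉₊] with m hm
  refine min_eq_left ?_
  rw [← inv_le_iff_one_le_mul₀ ha]
  exact (Nat.le_ceil _).trans (by exact_mod_cast hm)

theorem slice_mem_Icc (ht : t ∈ Icc (0 : ℝ) 1) (ha : 0 ≤ a) (m : ℕ) :
    slice m t a ∈ Icc (0 : ℝ) 1 := by
  unfold slice
  constructor
  · exact sub_nonneg.2 (min_le_min_left _ (ramp_le_succ ha m))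
  · have := le_min ht.1 (ramp_nonneg ha m)
    linarith [min_le_left t (ramp (m + 1) a), ht.2]

theorem slice_zero_right (m : ℕ) (t : ℝ) : slice m t 0 = 0 := by
  simp [slice, ramp_zero_right]

theorem slice_zero_left (ha : 0 ≤ a) (m : ℕ) : slice m 0 a = 0 := by
  simp [slice, min_eq_left (ramp_nonneg ha _)]

theorem sum_slice (ht : 0 ≤ t) (M : ℕ) :
    ∑ m ∈ Finset.range M, slice m t a = min t (ramp M a) := by
  induction M with
  | zero => simp [ramp_zero_left, ht]
  | succ M ih => rw [Finset.sum_range_succ, ih, slice]; ring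

theorem finite_slice_ne_zero (ha : 0 ≤ a) (t : ℝ) : {m | slice m t a ≠ 0}.Finite := by
  rcases ha.eq_or_lt with rfl | ha
  · simp [slice_zero_right]
  · have h₀ := eventually_ramp_eq_one ha
    have h₁ : ∀ᶠ m in atTop, ramp (m + 1) a = 1 := tendsto_add_atTop_nat 1 h₀
    have := h₀.and h₁
    rw [← Nat.cofinite_eq_atTop] at this
    refine eventually_cofinite.1 (this.mono ?_)
    rintro m ⟨h₀, h₁⟩
    simp [slice, h₀, h₁]

theorem eventually_sum_slice_eq (ht : t ∈ Icc (0 : ℝ) 1) (ha : 0 < a) :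
    ∀ᶠ M in atTop, ∑ m ∈ Finset.range M, slice m t a = t := by
  filter_upwards [eventually_ramp_eq_one ha] with M hM
  rw [sum_slice ht.1, hM, min_eq_left ht.2]

theorem eq_of_forall_slice_eq {t' a' : ℝ} (ht : t ∈ Icc (0 : ℝ) 1) (ht' : t' ∈ Icc (0 : ℝ) 1)
    (ha : 0 < a) (ha' : 0 < a') (h : ∀ m, slice m t a = slice m t' a') : t = t' := by
  obtain ⟨M, hM, hM'⟩ :=
    ((eventually_sum_slice_eq ht ha).and (eventually_sum_slice_eq ht' ha')).exists
  rw [← hM, ← hM']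
  exact Finset.sum_congr rfl fun m _ => h m

theorem eq_zero_of_forall_slice_eq_zero (ht : 0 < t) (ha : 0 ≤ a)
    (h : ∀ m, slice m t a = 0) : a = 0 := by
  have := sum_slice (a := a) ht.le 1
  rw [Finset.sum_eq_zero fun m _ => h m, ramp, Nat.cast_one, one_mul] at this
  by_contra hne
  have := lt_min ht (lt_min one_pos (ha.lt_of_ne' hne))
  linarith

end Slice

theorem continuous_slice {X : Type*} [TopologicalSpace X] {t a : X → ℝ} (ht : Continuous t)
    (ha : Continuous a) (m : ℕ) : Continuous fun x => slice m (t x) (a x) := by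
  unfold slice ramp; fun_prop

theorem isPointFiniteFamily_slice {ι X : Type*} [TopologicalSpace X] {t a : ι → X → ℝ}
    (htc : ∀ i, Continuous (t i)) (ht : ∀ i x, t i x ∈ Icc (0 : ℝ) 1)
    (hac : ∀ i, Continuous (a i)) (ha : ∀ i x, 0 ≤ a i x)
    (hfin : ∀ x, {i | t i x ≠ 0 ∧ a i x ≠ 0}.Finite) :
    IsPointFiniteFamily fun (p : ι × ℕ) x => slice p.2 (t p.1 x) (a p.1 x) := by
  refine ⟨fun p => continuous_slice (htc _) (hac _) _, fun p x => slice_mem_Icc (ht _ _) (ha _ _) _,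
    fun x => ((hfin x).biUnion fun i _ =>
      (finite_singleton i).prod (finite_slice_ne_zero (ha i x) (t i x))).subset ?_⟩
  rintro ⟨i, m⟩ hp
  have hti : t i x ≠ 0 := fun h0 => hp (by simp only [h0, slice_zero_left (ha i x)])
  have hai : a i x ≠ 0 := fun h0 => hp (by simp only [h0, slice_zero_right])
  exact mem_biUnion (x := i) ⟨hti, hai⟩ ⟨rfl, hp⟩

/-- The two halves of the coordinates of an embedding of the Alexandroff duplicate of `K` into
`[0,1]^Γ` with dense σ-product trace: `f` comes from `K × {0}` and `s` from the isolated points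
`K × {1}`. -/
structure IsDuplicatePair {K Γ : Type*} [TopologicalSpace K] (f s : Γ → K → ℝ) : Prop where
  mem_Icc : ∀ γ x, f γ x ∈ Icc (0 : ℝ) 1
  continuous : ∀ γ, Continuous (f γ)
  separates : ∀ x y, (∀ γ, f γ x = f γ y) → x = y
  finite_support : ∀ x, {γ | s γ x ≠ 0}.Finite
  tendsto : ∀ γ x, Tendsto (s γ) (𝓝[≠] x) (𝓝 (f γ x))

namespace IsDuplicatePair

variable {K Γ : Type*} [TopologicalSpace K] {f s : Γ → K → ℝ}

def badSet (f s : Γ → K → ℝ) (γ : Γ) (n : ℕ) : Set K :=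
  {z | {γ | f γ z ≠ 0}.Infinite ∧ tent n (f γ z) ≠ 0 ∧ ((2 : ℝ) ^ (n + 1))⁻¹ ≤ |s γ z - f γ z|}

def badPoints (f s : Γ → K → ℝ) : Set K := ⋃ γ, ⋃ n, badSet f s γ n

def slots (f s : Γ → K → ℝ) (x : K) : Set (Γ × ℕ) :=
  {q | tent q.2 (f q.1 x) ≠ 0 ∧ x ∉ badSet f s q.1 q.2}

noncomputable def supportCard (s : Γ → K → ℝ) (x : K) : ℕ := {γ | s γ x ≠ 0}.ncard

theorem finite_farSet [CompactSpace K] (hD : IsDuplicatePair f s) (γ : Γ) {ε : ℝ} (hε : 0 < ε) :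
    {x | ε ≤ |s γ x - f γ x|}.Finite := by
  refine finite_of_forall_eventually_nhdsNE_notMem fun x => ?_
  have : Tendsto (fun y => s γ y - f γ y) (𝓝[≠] x) (𝓝 0) := by
    simpa using (hD.tendsto γ x).sub
      (((hD.continuous γ).tendsto x).mono_left nhdsWithin_le_nhds)
  filter_upwards [Metric.tendsto_nhds.1 this ε hε] with y hy
  rw [Real.dist_0_eq_abs] at hy
  exact not_le.2 hy

theorem finite_badSet [CompactSpace K] (hD : IsDuplicatePair f s) (γ : Γ) (n : ℕ) :
    (badSet f s γ n).Finite :=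
  (hD.finite_farSet γ (by positivity)).subset fun _ hz => hz.2.2

theorem finite_slots (hD : IsDuplicatePair f s) (x : K) : (slots f s x).Finite := by
  have key (G : Set Γ) (hG : G.Finite) :
      {q : Γ × ℕ | q.1 ∈ G ∧ tent q.2 (f q.1 x) ≠ 0}.Finite :=
    (hG.biUnion fun γ _ => (finite_singleton γ).prod (finite_tent_ne_zero (f γ x))).subset
      fun q hq => mem_biUnion hq.1 ⟨rfl, hq.2⟩
  by_cases hx : {γ | f γ x ≠ 0}.Infinite
  · -- where `s γ x = 0`, the distance `|s γ x - f γ x| = f γ x` is already large on the tent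
    refine (key _ (hD.finite_support x)).subset fun q hq => ⟨fun hs => hq.2 ⟨hx, hq.1, ?_⟩, hq.1⟩
    rw [hs, zero_sub, abs_neg, abs_of_nonneg (hD.mem_Icc _ _).1]
    exact (inv_lt_of_tent_ne_zero hq.1).le
  · refine (key _ (not_infinite.1 hx)).subset fun q hq => ⟨fun h0 => hq.1 ?_, hq.1⟩
    rw [h0]
    exact tent_zero_right _

theorem eventually_lt_supportCard (hD : IsDuplicatePair f s) {z : K}
    (hz : {γ | f γ z ≠ 0}.Infinite) (m : ℕ) : ∀ᶠ x in 𝓝[≠] z, m < supportCard s x := by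
  obtain ⟨A, hAsub, hAcard⟩ := hz.exists_subset_card_eq (m + 1)
  have : ∀ᶠ x in 𝓝[≠] z, ∀ γ ∈ A, s γ x ≠ 0 :=
    (eventually_all_finset A).2 fun γ hγ => (hD.tendsto γ z).eventually_ne (hAsub hγ)
  filter_upwards [this] with x hx
  calc m < A.card := by omega
    _ = (A : Set Γ).ncard := (ncard_coe_finset A).symm
    _ ≤ supportCard s x := ncard_le_ncard (fun γ hγ => hx γ hγ) (hD.finite_support x)

theorem isGδ_singleton [CompactSpace K] [T1Space K] (hD : IsDuplicatePair f s) {z : K}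
    (hz : {γ | f γ z ≠ 0}.Infinite) : IsGδ ({z} : Set K) := by
  let a : ℕ → Γ := fun j => hz.natEmbedding _ j
  have ha : Function.Injective a := Subtype.val_injective.comp (hz.natEmbedding _).injective
  have hapos (j : ℕ) : 0 < f (a j) z :=
    (hD.mem_Icc _ _).1.lt_of_ne' (hz.natEmbedding _ j).2
  let C : Set K := ⋂ j, f (a j) ⁻¹' {f (a j) z}
  -- a point agreeing with `z` on the coordinates `a j` is far from `s` at some `a j`,
  -- since `s` has finite support
  have hC : C.Countable := by
    refine (countable_iUnion fun j => (hD.finite_farSet (a j) (hapos j)).countable).mono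
      fun x hx => ?_
    have hxj (j : ℕ) : f (a j) x = f (a j) z := mem_iInter.1 hx j
    obtain ⟨j, hj⟩ : ∃ j, s (a j) x = 0 := by
      by_contra! h
      exact infinite_of_injective_forall_mem ha h (hD.finite_support x)
    refine mem_iUnion.2 ⟨j, ?_⟩
    change f (a j) z ≤ |s (a j) x - f (a j) x|
    rw [hj, hxj, zero_sub, abs_neg, abs_of_pos (hapos j)]
  have hCGδ : IsGδ C := .iInter fun j =>
    isClosed_singleton.isGδ.preimage (hD.continuous (a j))
  have hzC : z ∈ C := mem_iInter.2 fun j => rfl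
  have : ({z} : Set K) = C ∩ (C \ {z})ᶜ := by
    ext x
    constructor
    · rintro rfl
      exact ⟨hzC, fun h => h.2 rfl⟩
    · rintro ⟨hxC, hx⟩
      by_contra hxz
      exact hx ⟨hxC, hxz⟩
  rw [this]
  exact hCGδ.inter (hC.mono sdiff_subset).isGδ_compl

theorem exists_continuous_eq_zero_iff [CompactSpace K] [T2Space K] (hD : IsDuplicatePair f s)
    {S : Set K} (hS : S.Finite) (hSbad : S ⊆ badPoints f s) :
    ∃ g : K → ℝ, Continuous g ∧ (∀ x, 0 ≤ g x) ∧ ∀ x, g x = 0 ↔ x ∈ S := by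
  refine IsGδ.exists_continuous_eq_zero_iff ?_ hS.isCompact
  rw [← biUnion_of_singleton S]
  refine .biUnion hS fun z hz => hD.isGδ_singleton ?_
  obtain ⟨γ, n, hzγn⟩ := mem_iUnion₂.1 (hSbad hz)
  exact hzγn.1

-- `u` is supported near `z`, where `s` has more nonzero coordinates than anywhere on the
-- finite set `badSet f s γ n ∋ z`.
theorem exists_bump [CompactSpace K] [T2Space K] (hD : IsDuplicatePair f s) (z : K) :
    ∃ u : K → ℝ, Continuous u ∧ (∀ x, u x ∈ Icc (0 : ℝ) 1) ∧ (z ∈ badPoints f s → u z = 1) ∧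
      ∀ x, u x ≠ 0 → x ≠ z → ∃ q ∈ slots f s x, z ∈ badSet f s q.1 q.2 := by
  by_cases hz : z ∈ badPoints f s
  swap
  · exact ⟨0, continuous_const, fun _ => ⟨le_rfl, zero_le_one⟩, fun h => absurd h hz,
      fun _ h => absurd rfl h⟩
  obtain ⟨γ, n, hzγn⟩ := mem_iUnion₂.1 hz
  obtain ⟨m, hm⟩ := ((hD.finite_badSet γ n).image (supportCard s)).bddAbove
  have hev : ∀ᶠ x in 𝓝 z, x ≠ z → m < supportCard s x ∧ tent n (f γ x) ≠ 0 := by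
    filter_upwards [eventually_nhdsWithin_iff.1 (hD.eventually_lt_supportCard hzγn.1 m),
      ((continuous_tent n).comp (hD.continuous γ)).continuousAt.eventually_ne hzγn.2.1]
      with x hx htx hxz using ⟨hx hxz, htx⟩
  obtain ⟨V, hV, hVo, hzV⟩ := eventually_nhds_iff.1 hev
  obtain ⟨u, hu0, hu1, hu⟩ := exists_continuous_zero_one_of_isClosed hVo.isClosed_compl
    isClosed_singleton (disjoint_singleton_right.2 (not_not.2 hzV))
  refine ⟨u, u.continuous, hu, fun _ => hu1 rfl, fun x hx hxz => ⟨(γ, n), ?_, hzγn⟩⟩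
  have hxV : x ∈ V := by
    by_contra h
    exact hx (hu0 h)
  obtain ⟨hmx, htx⟩ := hV x hxV hxz
  exact ⟨htx, fun hxbad => (hm ⟨x, hxbad, rfl⟩).not_gt hmx⟩

end IsDuplicatePair

theorem IsDuplicatePair.omegaCorson {K Γ : Type u} [TopologicalSpace K] [CompactSpace K]
    [T2Space K] {f s : Γ → K → ℝ} (hD : IsDuplicatePair f s) : OmegaCorson K := by
  classical
  choose G hGc hG0 hG using fun q : Γ × ℕ => hD.exists_continuous_eq_zero_iff
    (hD.finite_badSet q.1 q.2) fun z hz => mem_iUnion₂.2 ⟨q.1, q.2, hz⟩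
  choose g hgc hg0 hg using fun z : K => hD.exists_continuous_eq_zero_iff
    ((finite_singleton z).inter_of_left (badPoints f s)) inter_subset_right
  choose u huc hu hu1 husupp using hD.exists_bump
  have bands := isPointFiniteFamily_slice (t := fun (q : Γ × ℕ) x => tent q.2 (f q.1 x))
    (fun _ => (continuous_tent _).comp (hD.continuous _)) (fun _ _ => tent_mem_Icc _ _) hGc hG0
    fun x => (hD.finite_slots x).subset fun q hq => ⟨hq.1, fun hbad => hq.2 ((hG q x).2 hbad)⟩
  have bumps : IsPointFiniteFamily u := by
    refine ⟨huc, hu, fun x => (((hD.finite_slots x).biUnion fun q _ =>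
      hD.finite_badSet q.1 q.2).insert x).subset fun z hz => ?_⟩
    rcases eq_or_ne x z with rfl | hxz
    · exact mem_insert _ _
    · obtain ⟨q, hq, hzq⟩ := husupp z x hz hxz
      exact mem_insert_of_mem _ (mem_biUnion hq hzq)
  have bumpSlices := isPointFiniteFamily_slice huc hu hgc hg0 fun x =>
    (bumps.finite_ne_zero x).subset fun _ hz => hz.1
  have eq_of_mem_badPoints (x y : K) (hx : x ∈ badPoints f s) (hu : u x x = u x y)
      (hs : ∀ m, slice m (u x x) (g x x) = slice m (u x y) (g x y)) : y = x := by
    have hgx : g x x = 0 := (hg x x).2 ⟨rfl, hx⟩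
    have hpos : 0 < u x y := by rw [← hu, hu1 x hx]; exact one_pos
    have hgy : g x y = 0 := eq_zero_of_forall_slice_eq_zero hpos (hg0 x y) fun m => by
      rw [← hs m, hgx, slice_zero_right]
    exact ((hg x y).1 hgy).1
  refine ((bands.sumElim bumps).sumElim bumpSlices).omegaCorson fun x y hxy => ?_
  by_cases hx : x ∈ badPoints f s
  · exact (eq_of_mem_badPoints x y hx (hxy (.inl (.inr x))) fun m => hxy (.inr (x, m))).symm
  by_cases hy : y ∈ badPoints f s
  · exact eq_of_mem_badPoints y x hy (hxy (.inl (.inr y))).symm fun m => (hxy (.inr (y, m))).symm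
  have hGpos (w : K) (hw : w ∉ badPoints f s) (q : Γ × ℕ) : 0 < G q w :=
    (hG0 q w).lt_of_ne' fun h => hw (mem_iUnion₂.2 ⟨q.1, q.2, (hG q w).1 h⟩)
  refine hD.separates x y fun γ =>
    eq_of_forall_tent_eq (hD.mem_Icc γ x) (hD.mem_Icc γ y) fun n => ?_
  exact eq_of_forall_slice_eq (tent_mem_Icc _ _) (tent_mem_Icc _ _) (hGpos x hx _) (hGpos y hy _)
    fun m => hxy (.inl (.inl ((γ, n), m)))

theorem isDuplicatePair_of_omegaValdivia_adTopology {K : Type u} [TopologicalSpace K]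
    (hK : @OmegaValdivia (K × Bool) (adTopology K)) :
    ∃ (Γ : Type u) (f s : Γ → K → ℝ), IsDuplicatePair f s := by
  let := adTopology K
  obtain ⟨Γ, h, hh, hdense⟩ := hK
  have hcont (γ : Γ) : Continuous fun p => (h p γ : ℝ) :=
    continuous_subtype_val.comp ((continuous_apply γ).comp hh.continuous)
  refine ⟨Γ, fun γ x => h (x, false) γ, fun γ x => h (x, true) γ,
    ⟨fun γ x => (h _ γ).2, fun γ => (hcont γ).comp adTopology.continuous_mk_false,
      fun x y hxy => ?_, fun x => ?_, fun γ x => ?_⟩⟩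
  · exact congrArg Prod.fst (hh.injective (funext fun γ => Subtype.ext (hxy γ)))
  · -- the isolated point `(x, true)` must lie in the dense σ-product trace
    refine (hh.mem_of_mem_closure_of_isOpen_singleton (adTopology.isOpen_singleton_true x)
      (hdense (mem_range_self _))).subset fun γ hγ h0 => hγ ?_
    simp [h0]
  · exact ((hcont γ).tendsto (x, false)).comp (adTopology.tendsto_mk_true x)

theorem omegaCorson_adTopology {K : Type u} [TopologicalSpace K] [CompactSpace K] [T1Space K]
    (hK : OmegaCorson K) : @OmegaCorson (K × Bool) (adTopology K) := by
  classical
  let := adTopology K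
  have := adTopology.compactSpace (X := K)
  obtain ⟨Γ, e, he, hfin⟩ := hK
  have coords : IsPointFiniteFamily fun (γ : Γ) (p : K × Bool) => (e p.1 γ : ℝ) :=
    ⟨fun γ => continuous_subtype_val.comp
      (((continuous_apply γ).comp he.continuous).comp adTopology.continuous_fst),
      fun γ p => (e p.1 γ).2, fun p => (hfin p.1).subset fun γ hγ h0 => hγ (by simp [h0])⟩
  have points : IsPointFiniteFamily fun (x : K) => ({(x, true)} : Set (K × Bool)).indicator 1 := by
    refine ⟨fun x => (adTopology.isClopen_singleton_true x).continuous_indicator continuous_const,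
      fun x p => ?_, fun p => (finite_singleton p.1).subset fun x hx => ?_⟩
    · by_cases hp : p = (x, true) <;> simp [hp]
    · by_contra hpx
      exact hx (indicator_of_notMem (fun h => hpx (by rw [mem_singleton_iff.1 h]; rfl)) _)
  refine (coords.sumElim points).omegaCorson fun p q hpq => ?_
  have h₁ : p.1 = q.1 := he.injective (funext fun γ => Subtype.ext (hpq (.inl γ)))
  have h₂ := hpq (.inr p.1)
  obtain ⟨x, b⟩ := p
  obtain ⟨y, c⟩ := q
  obtain rfl : x = y := h₁
  cases b <;> cases c <;> simp_all

/-- for a compact Hausdorff space `K`, `K` is ω-Corson iff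
`AD(K)` is ω-Corson iff `AD(K)` is ω-Valdivia. -/
theorem omegaCorson_AD_characterization
    (K : Type u) [TopologicalSpace K] [CompactSpace K] [T2Space K] :
    (OmegaCorson K ↔ @OmegaCorson (K × Bool) (adTopology K)) ∧
    (OmegaCorson K ↔ @OmegaValdivia (K × Bool) (adTopology K)) := by
  let := adTopology K
  have toAD : OmegaCorson K → @OmegaCorson (K × Bool) (adTopology K) := omegaCorson_adTopology
  have ofAD (h : @OmegaCorson (K × Bool) (adTopology K)) : OmegaCorson K :=
    h.of_isEmbedding adTopology.isEmbedding_mk_false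
  refine ⟨⟨toAD, ofAD⟩, fun h => (toAD h).omegaValdivia, fun h => ?_⟩
  obtain ⟨Γ, f, s, hD⟩ := isDuplicatePair_of_omegaValdivia_adTopology h
  exact hD.omegaCorson
end

section
/- Let A(ω₁) denote the one-point compactification of a discrete space of cardinality ℵ₁. The countable product A(ω₁)^ω is not M-scattered; consequently A(ω₁)^ω is not NY compact. -/
open Topology Set

universe u v

/-!
In `A(ω₁)^ω` a nonempty basic open set restricts only finitely many coordinates, so along a free
coordinate it splits into `ℵ₁` disjoint nonempty open sets, one for each isolated point of
`A(ω₁)`; hence no nonempty open set is second countable and the space is not M-scattered.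
On the other hand every nonempty compact subset of a σ-product of second-countable Hausdorff
spaces has a nonempty second-countable relatively open piece: by induction on a bound `n` for
the supports, near a point with a nontrivial coordinate `γ₀` the set embeds into the
second-countable factor `X γ₀` times a compact set with supports of size `≤ n - 1`.
So NY compacta are M-scattered.
-/
theorem Topology.IsInducing.secondCountableTopology_of_mapsTo {X Y : Type*}
    [TopologicalSpace X] [TopologicalSpace Y] {f : X → Y} (hf : IsInducing f) {s : Set X}
    {t : Set Y} (hst : MapsTo f s t) [SecondCountableTopology t] : SecondCountableTopology s :=
  (IsInducing.of_comp (hf.continuous.restrict hst) continuous_subtype_val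
    (hf.comp IsInducing.subtypeVal)).secondCountableTopology

theorem secondCountableTopology_of_subset {X : Type*} [TopologicalSpace X] {s t : Set X}
    (hst : s ⊆ t) [SecondCountableTopology t] : SecondCountableTopology s :=
  IsInducing.id.secondCountableTopology_of_mapsTo hst

theorem OnePoint.not_secondCountableTopology_of_isOpen_pi {ι D : Type*} [Infinite ι]
    [TopologicalSpace D] [DiscreteTopology D] [Uncountable D] {U : Set (ι → OnePoint D)}
    (hU : IsOpen U) (hne : U.Nonempty) : ¬ SecondCountableTopology U := by
  classical
  intro hsc
  obtain ⟨x, hx⟩ := hne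
  obtain ⟨I, u, hIu, hIU⟩ := isOpen_pi_iff.mp hU x hx
  obtain ⟨m, hm⟩ := Infinite.exists_notMem_finset I
  have hmem (d : D) : Function.update x m ↑d ∈ U := hIU fun i hi => by
    rw [Function.update_of_ne (ne_of_mem_of_not_mem hi hm)]
    exact (hIu i hi).2
  have hisolated (d : D) : IsOpen {(d : OnePoint D)} := by
    simpa using OnePoint.isOpen_image_coe.mpr (isOpen_discrete {d})
  have hcount : (univ : Set D).Countable :=
    PairwiseDisjoint.countable_of_isOpen (s := fun d : D => {p : U | p.1 m = d})
      (fun d _ e _ hde => disjoint_left.mpr fun _ hd he =>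
        hde (OnePoint.coe_injective (hd.symm.trans he)))
      (fun d _ => (hisolated d).preimage ((continuous_apply m).comp continuous_subtype_val :
        Continuous fun p : U => p.1 m))
      (fun d _ => ⟨⟨_, hmem d⟩, by simp⟩)
  exact not_countable_univ hcount

theorem MScattered.not_pi_onePoint {ι D : Type*} [Infinite ι] [TopologicalSpace D]
    [DiscreteTopology D] [Uncountable D] : ¬ MScattered (ι → OnePoint D) := fun h => by
  obtain ⟨U, hU, hne, hsc⟩ := h univ univ_nonempty
  rw [univ_inter] at hne hsc
  exact OnePoint.not_secondCountableTopology_of_isOpen_pi hU hne hsc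

def HasSecondCountableRelOpen {X : Type*} [TopologicalSpace X] (A : Set X) : Prop :=
  ∃ U : Set X, IsOpen U ∧ (A ∩ U).Nonempty ∧ SecondCountableTopology ↥(A ∩ U)

namespace HasSecondCountableRelOpen

variable {X Y Z : Type*} [TopologicalSpace X] [TopologicalSpace Y] [TopologicalSpace Z]

theorem of_subsingleton {A : Set X} (hne : A.Nonempty) (hA : A.Subsingleton) :
    HasSecondCountableRelOpen A := by
  refine ⟨univ, isOpen_univ, by rwa [inter_univ], ?_⟩
  have : Subsingleton ↥(A ∩ univ) := (hA.anti inter_subset_left).coe_sort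
  infer_instance

theorem of_closure_inter {A U : Set X} (hU : IsOpen U)
    (h : HasSecondCountableRelOpen (closure (A ∩ U))) : HasSecondCountableRelOpen A := by
  obtain ⟨V, hV, hne, hsc⟩ := h
  refine ⟨U ∩ V, hU.inter hV, ?_, ?_⟩
  · simpa only [inter_assoc] using (closure_inter_open_nonempty_iff hV).mp hne
  · rw [← inter_assoc]
    exact secondCountableTopology_of_subset (inter_subset_inter_left V subset_closure)

theorem of_isEmbedding_image {f : X → Y} (hf : IsEmbedding f) {A : Set X}
    (h : HasSecondCountableRelOpen (f '' A)) : HasSecondCountableRelOpen A := by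
  obtain ⟨V, hV, ⟨_, ⟨x, hx, rfl⟩, hxV⟩, hsc⟩ := h
  exact ⟨f ⁻¹' V, hV.preimage hf.continuous, ⟨x, hx, hxV⟩,
    hf.isInducing.secondCountableTopology_of_mapsTo (t := f '' A ∩ V) fun y hy =>
      ⟨mem_image_of_mem f hy.1, hy.2⟩⟩

theorem of_image_of_isInducing_prod [SecondCountableTopology Z] {f : X → Y} (hf : Continuous f)
    {g : X → Z} (hfg : IsInducing fun x => (g x, f x)) {A : Set X}
    (h : HasSecondCountableRelOpen (f '' A)) : HasSecondCountableRelOpen A := by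
  obtain ⟨V, hV, ⟨_, ⟨x, hx, rfl⟩, hxV⟩, hsc⟩ := h
  have : SecondCountableTopology ↥((univ : Set Z) ×ˢ (f '' A ∩ V)) :=
    (Homeomorph.Set.prod _ _).isInducing.secondCountableTopology
  exact ⟨f ⁻¹' V, hV.preimage hf, ⟨x, hx, hxV⟩,
    hfg.secondCountableTopology_of_mapsTo (t := univ ×ˢ (f '' A ∩ V)) fun y hy =>
      ⟨mem_univ _, mem_image_of_mem f hy.1, hy.2⟩⟩

end HasSecondCountableRelOpen

section SigmaProduct

variable {Γ : Type*} {X : Γ → Type*} [∀ γ, TopologicalSpace (X γ)]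

theorem isClosed_setOf_encard_ne_le [∀ γ, T1Space (X γ)] (a : ∀ γ, X γ) (n : ℕ) :
    IsClosed {y : ∀ γ, X γ | {γ | y γ ≠ a γ}.encard ≤ n} := by
  refine isOpen_compl_iff.mp (isOpen_iff_forall_mem_open.mpr fun y hy => ?_)
  have hny : (n : ℕ∞) < {γ | y γ ≠ a γ}.encard := not_le.mp hy
  obtain ⟨s, hsy, hs⟩ := exists_subset_encard_eq (k := ((n + 1 : ℕ) : ℕ∞))
    (by simpa using Order.add_one_le_of_lt hny)
  refine ⟨⋂ γ ∈ s, {z | z γ ≠ a γ}, fun z hz hzn => ?_,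
    (finite_of_encard_eq_coe hs).isOpen_biInter fun γ _ =>
      isOpen_compl_singleton.preimage (continuous_apply γ),
    mem_iInter₂.mpr hsy⟩
  have hsz : s ⊆ {γ | z γ ≠ a γ} := fun γ hγ => mem_iInter₂.mp hz γ hγ
  have := (encard_le_encard hsz).trans hzn
  rw [hs, Nat.cast_le] at this
  omega

theorem isInducing_apply_prod_update [DecidableEq Γ] (γ₀ : Γ) (c : X γ₀) :
    IsInducing fun y : (∀ γ, X γ) => (y γ₀, Function.update y γ₀ c) :=
  IsInducing.of_comp (by fun_prop) (continuous_snd.update γ₀ continuous_fst)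
    (by convert IsInducing.id; ext y; simp)

variable [∀ γ, T2Space (X γ)] [∀ γ, SecondCountableTopology (X γ)]

theorem hasSecondCountableRelOpen_of_encard_le (a : ∀ γ, X γ) (n : ℕ) {A : Set (∀ γ, X γ)}
    (hA : IsCompact A) (hne : A.Nonempty) (hn : ∀ y ∈ A, {γ | y γ ≠ a γ}.encard ≤ n) :
    HasSecondCountableRelOpen A := by
  classical
  induction n generalizing A with
  | zero =>
    have hAa (y) (hy : y ∈ A) : y = a := by
      simpa [funext_iff, eq_empty_iff_forall_notMem] using hn y hy
    exact .of_subsingleton hne fun y hy z hz => (hAa y hy).trans (hAa z hz).symm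
  | succ n ih =>
    by_cases hAa : A ⊆ {a}
    · exact .of_subsingleton hne (subsingleton_singleton.anti hAa)
    obtain ⟨x, hxA, hxa⟩ := not_subset.mp hAa
    obtain ⟨γ₀, hγ₀⟩ := Function.ne_iff.mp hxa
    obtain ⟨W, V, hW, hV, hxW, haV, hWV⟩ := t2_separation hγ₀
    have hWa : a γ₀ ∉ closure W := fun h => (hWV.closure_left hV).ne_of_mem h haV rfl
    set A' := closure (A ∩ (fun y => y γ₀) ⁻¹' W)
    have hA'A : A' ⊆ A := closure_minimal inter_subset_left hA.isClosed
    have hA'W : ∀ y ∈ A', y γ₀ ≠ a γ₀ := fun y hy h => hWa <| h ▸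
      closure_minimal (inter_subset_right.trans (preimage_mono subset_closure))
        (isClosed_closure.preimage (continuous_apply γ₀)) hy
    let ρ : (∀ γ, X γ) → ∀ γ, X γ := fun y => Function.update y γ₀ (a γ₀)
    have hρ : Continuous ρ := continuous_id.update γ₀ continuous_const
    -- erasing the coordinate `γ₀`, which lies in the support of every point of `A'`
    have hρn : ∀ z ∈ ρ '' A', {γ | z γ ≠ a γ}.encard ≤ n := by
      rintro _ ⟨y, hy, rfl⟩
      have hsupp : {γ | ρ y γ ≠ a γ} = {γ | y γ ≠ a γ} \ {γ₀} := by
        ext γ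
        by_cases h : γ = γ₀ <;> simp [ρ, h, Function.update_of_ne]
      have := (encard_sdiff_singleton_add_one (hA'W y hy)).trans_le (hn y (hA'A hy))
      rw [hsupp]
      exact (ENat.add_le_add_iff_right ENat.one_ne_top).mp this
    have hρA' : HasSecondCountableRelOpen (ρ '' A') :=
      ih ((hA.of_isClosed_subset isClosed_closure hA'A).image hρ)
        ⟨ρ x, x, subset_closure ⟨hxA, hxW⟩, rfl⟩ hρn
    exact .of_closure_inter (hW.preimage (continuous_apply γ₀))
      (hρA'.of_image_of_isInducing_prod hρ (isInducing_apply_prod_update γ₀ (a γ₀)))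

/-- By Baire category in `A`, the points with supports of size `≤ n` have nonempty interior
in `A` for some `n`. -/
theorem IsCompact.hasSecondCountableRelOpen_of_finite (a : ∀ γ, X γ) {A : Set (∀ γ, X γ)}
    (hA : IsCompact A) (hne : A.Nonempty)
    (hfin : ∀ y ∈ A, {γ | y γ ≠ a γ}.Finite) : HasSecondCountableRelOpen A := by
  let C (n : ℕ) : Set A := {y | {γ | y.1 γ ≠ a γ}.encard ≤ n}
  have := isCompact_iff_compactSpace.mp hA
  have := hne.to_subtype
  have hcover : ⋃ n, C n = univ :=
    iUnion_eq_univ_iff.mpr fun y => ⟨_, (hfin y y.2).encard_eq_coe.le⟩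
  obtain ⟨n, b, hb⟩ := nonempty_interior_of_iUnion_of_closed (f := C)
    (fun n => (isClosed_setOf_encard_ne_le a n).preimage continuous_subtype_val) hcover
  obtain ⟨U, hU, hUA⟩ := isOpen_induced_iff.mp (isOpen_interior (s := C n))
  have hAUC : A ∩ U ⊆ {y | {γ | y γ ≠ a γ}.encard ≤ n} := fun y hy => by
    have hyU : (⟨y, hy.1⟩ : A) ∈ ((↑) : A → _) ⁻¹' U := hy.2
    rw [hUA] at hyU
    exact interior_subset (s := C n) hyU
  have hAU : closure (A ∩ U) ⊆ A := closure_minimal inter_subset_left hA.isClosed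
  refine .of_closure_inter hU (hasSecondCountableRelOpen_of_encard_le a n
    (hA.of_isClosed_subset isClosed_closure hAU) ?_
    (closure_minimal hAUC (isClosed_setOf_encard_ne_le a n)))
  rw [← hUA] at hb
  exact ⟨b, subset_closure ⟨b.2, hb⟩⟩

end SigmaProduct

theorem NYCompact.mscattered {K : Type u} [TopologicalSpace K] [CompactSpace K]
    (h : NYCompact K) : MScattered K := by
  obtain ⟨Γ, X, t, hcomp, hmet, a, f, hf, hfin⟩ := h
  have := hcomp
  have := hmet
  intro A hne
  show HasSecondCountableRelOpen A
  refine .of_closure_inter isOpen_univ (.of_isEmbedding_image hf ?_)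
  refine (isClosed_closure.isCompact.image hf.continuous).hasSecondCountableRelOpen_of_finite a
    ((hne.mono (inter_univ A).superset).closure.image f) ?_
  rintro _ ⟨k, -, rfl⟩
  exact hfin k

/-- the countable power of the one-point compactification of a discrete
space of cardinality ℵ₁ is not M-scattered, hence not NY compact. -/
theorem AOmegaOnePowOmega_not_MScattered_not_NY
    (D : Type) [TopologicalSpace D] [DiscreteTopology D]
    (hD : Cardinal.mk D = Cardinal.aleph 1) :
    ¬ MScattered (ℕ → OnePoint D) ∧ ¬ NYCompact (ℕ → OnePoint D) := by
  have : Uncountable D := by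
    rw [← not_countable_iff, ← Cardinal.mk_le_aleph0_iff, hD]
    exact Cardinal.aleph0_lt_aleph_one.not_ge
  have hM : ¬ MScattered (ℕ → OnePoint D) := MScattered.not_pi_onePoint
  exact ⟨hM, fun hNY => hM hNY.mscattered⟩
end

section
/- Let A(ω₁) denote the one-point compactification of a discrete space of cardinality ℵ₁. The Alexandroff duplicate AD(A(ω₁)^ω) of the countable product A(ω₁)^ω is not NY-Valdivia. -/
open Topology Set

universe u v

/-!
Suppose `h` witnesses that `AD(A(ω₁)^ω)` is NY-Valdivia. Each `(y, true)` is isolated, so `h (y, true)`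
lies in the dense σ-product trace. A point `x` of `A(ω₁)^ω` with a coordinate `∞` is not `Gδ`, so
countably many neighbourhoods of `(x, false)` always share some `(y, true)`, and it follows that
`h (x, false)` lies in the σ-product too. Precomposing with `y ↦ (∞, y₀, y₁, …)` gives a continuous
injection of the compact space `A(ω₁)^ω` into the σ-product. That is impossible: by Baire category
the supports are contained in one finite set `P` on some nonempty open set. That open set contains
the uncountable discrete family `update x k d`, which would then embed in the second countable
space `P → ℕ → [0,1]`.
-/

open Function OnePoint

theorem Topology.IsInducing.mem_of_mem_closure_of_isOpen_singleton {α β : Type*}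
    [TopologicalSpace α] [TopologicalSpace β] {f : α → β} (hf : IsInducing f) {a : α}
    (ha : IsOpen {a}) {S : Set β} (hS : f a ∈ closure (range f ∩ S)) : f a ∈ S := by
  obtain ⟨W, hW, hWa⟩ := hf.isOpen_iff.1 ha
  obtain ⟨_, hbW, ⟨b, rfl⟩, hbS⟩ :=
    mem_closure_iff.1 hS W hW (show a ∈ f ⁻¹' W from hWa ▸ rfl)
  have hb : b ∈ f ⁻¹' W := hbW
  rw [hWa, mem_singleton_iff] at hb
  rwa [hb] at hbS

theorem IsOpen.exists_forall_update_mem {ι : Type*} [Infinite ι] [DecidableEq ι]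
    {π : ι → Type*} [∀ i, TopologicalSpace (π i)] {V : Set (∀ i, π i)} (hV : IsOpen V)
    {x : ∀ i, π i} (hx : x ∈ V) : ∃ k, ∀ y, update x k y ∈ V := by
  obtain ⟨I, u, hu, hsub⟩ := isOpen_pi_iff.1 hV x hx
  obtain ⟨k, hk⟩ := Infinite.exists_notMem_finset I
  refine ⟨k, fun y => hsub fun i hi => ?_⟩
  rw [update_of_ne (ne_of_mem_of_not_mem hi hk)]
  exact (hu i hi).2

theorem isEmbedding_update {ι : Type*} [DecidableEq ι] {π : ι → Type*}
    [∀ i, TopologicalSpace (π i)] (x : ∀ i, π i) (k : ι) : IsEmbedding (update x k) :=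
  .of_leftInverse (f := eval k) (fun y => update_self k y x) (continuous_apply k)
    (continuous_const.update k continuous_id)

theorem not_isGδ_singleton_of_not_isGδ_apply {ι : Type*} [DecidableEq ι] {π : ι → Type*}
    [∀ i, TopologicalSpace (π i)] {x : ∀ i, π i} (k : ι) (hx : ¬IsGδ {x k}) : ¬IsGδ {x} := by
  intro h
  have : update x k ⁻¹' {x} = {x k} := by ext y; simp [update_eq_self_iff]
  exact hx (this ▸ h.preimage (continuous_const.update k continuous_id))

theorem OnePoint.not_isGδ_singleton_infty {D : Type*} [TopologicalSpace D] [DiscreteTopology D]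
    [Uncountable D] : ¬IsGδ {(∞ : OnePoint D)} := by
  rintro ⟨T, hTopen, hTcount, hT⟩
  have hfin : ∀ t ∈ T, ((↑) ⁻¹' t : Set D)ᶜ.Finite := fun t ht =>
    ((isOpen_iff_of_mem' (mem_sInter.1 (hT ▸ mem_singleton ∞) t ht)).1
      (hTopen t ht)).1.finite_of_discrete
  refine not_countable_univ (Countable.mono ?_ (hTcount.biUnion fun t ht => (hfin t ht).countable))
  intro d _
  have : (d : OnePoint D) ∉ ⋂₀ T := hT ▸ OnePoint.coe_ne_infty d
  simpa using this

section SigmaProduct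

variable {Γ Q : Type*} [TopologicalSpace Q] [Zero Q]

theorem lowerSemicontinuous_encard_support [T1Space Q] :
    LowerSemicontinuous fun w : Γ → Q => (support w).encard := by
  intro w k hk
  have hk_top : k ≠ ⊤ := ne_top_of_lt hk
  obtain ⟨s, hsw, hs⟩ := exists_subset_encard_eq (Order.add_one_le_of_lt hk)
  have hsfin : s.Finite := encard_ne_top_iff.1 <| by
    rw [hs]
    exact WithTop.add_ne_top.2 ⟨hk_top, WithTop.one_ne_top⟩
  have hopen : IsOpen (⋂ γ ∈ s, {w' : Γ → Q | w' γ ≠ 0}) :=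
    hsfin.isOpen_biInter fun γ _ => isOpen_compl_singleton.preimage (continuous_apply γ)
  filter_upwards [hopen.mem_nhds (mem_iInter₂.2 hsw)] with w' hw'
  calc k < k + 1 := (ENat.lt_add_one_iff hk_top).2 le_rfl
    _ = s.encard := hs.symm
    _ ≤ (support w').encard := encard_mono fun γ hγ => mem_iInter₂.1 hw' γ hγ

theorem exists_isOpen_support_subset {X : Type*} [TopologicalSpace X] [BaireSpace X]
    [Nonempty X] [T1Space Q] {g : X → Γ → Q} (hg : Continuous g)
    (hfin : ∀ x, (support (g x)).Finite) :
    ∃ V : Set X, IsOpen V ∧ V.Nonempty ∧ ∃ P : Set Γ, P.Finite ∧ ∀ y ∈ V, support (g y) ⊆ P := by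
  have hclosed (n : ℕ) : IsClosed {x | (support (g x)).encard ≤ n} :=
    (lowerSemicontinuous_encard_support.comp hg).isClosed_preimage n
  have hcover : ⋃ n : ℕ, {x | (support (g x)).encard ≤ n} = univ :=
    eq_univ_of_forall fun x => mem_iUnion.2
      ⟨(hfin x).toFinset.card, by simp [(hfin x).encard_eq_coe_toFinset_card]⟩
  obtain ⟨n, hU⟩ := nonempty_interior_of_iUnion_of_closed hclosed hcover
  set U := interior {x | (support (g x)).encard ≤ n}
  have hbdd : (fun x => (support (g x)).encard) '' U ⊆ (↑) '' Iic n := by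
    rintro _ ⟨x, hx, rfl⟩
    have hxn : x ∈ {x | (support (g x)).encard ≤ n} := interior_subset hx
    obtain ⟨m, hm, hmn⟩ := ENat.le_natCast_iff.1 hxn
    exact ⟨m, hmn, hm.symm⟩
  -- around a point of maximal support size on `U`, supports can neither shrink nor grow
  obtain ⟨x, hxU, hmax⟩ :=
    Set.Finite.exists_maximalFor' _ U (((finite_Iic n).image _).subset hbdd) hU
  refine ⟨U ∩ ⋂ γ ∈ support (g x), {y | g y γ ≠ 0}, ?_, ⟨x, hxU, mem_iInter₂.2 fun γ hγ => hγ⟩,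
    support (g x), hfin x, ?_⟩
  · exact isOpen_interior.inter <| (hfin x).isOpen_biInter fun γ _ =>
      isOpen_compl_singleton.preimage ((continuous_apply γ).comp hg)
  · rintro y ⟨hyU, hy⟩
    have hsub : support (g x) ⊆ support (g y) := fun γ hγ => mem_iInter₂.1 hy γ hγ
    exact ((hfin x).eq_of_subset_of_encard_le hsub (hmax hyU (encard_mono hsub))).ge

theorem countable_of_isEmbedding_of_support_subset {T : Type*} [TopologicalSpace T]
    [DiscreteTopology T] [SecondCountableTopology Q] {f : T → Γ → Q} (hf : IsEmbedding f)
    {P : Set Γ} (hP : P.Finite) (hsupp : ∀ t, support (f t) ⊆ P) : Countable T := by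
  classical
  have := hP.countable.to_subtype
  let extend (a : P → Q) (γ : Γ) : Q := if hγ : γ ∈ P then a ⟨γ, hγ⟩ else 0
  have hextend : Continuous extend := continuous_pi fun γ => by
    by_cases hγ : γ ∈ P
    · simpa [extend, hγ] using continuous_apply (⟨γ, hγ⟩ : P)
    · simpa [extend, hγ] using continuous_const
  have hrestrict : IsEmbedding fun t (γ : P) => f t γ := by
    refine .of_comp (by fun_prop) hextend ?_
    convert hf using 1
    funext t γ
    by_cases hγ : γ ∈ P
    · simp [extend, hγ]
    · simp [extend, hγ, notMem_support.1 fun h => hγ (hsupp t h)]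
  have := hrestrict.secondCountableTopology
  exact TopologicalSpace.separableSpace_iff_countable.1 inferInstance

end SigmaProduct

theorem exists_infinite_support_of_continuous_injective {D Γ Q : Type*} [TopologicalSpace D]
    [DiscreteTopology D] [Uncountable D] [TopologicalSpace Q] [Zero Q] [T2Space Q]
    [SecondCountableTopology Q] {g : (ℕ → OnePoint D) → Γ → Q} (hg : Continuous g)
    (hinj : Injective g) : ∃ x, (support (g x)).Infinite := by
  by_contra! hfin
  obtain ⟨V, hV, ⟨x, hxV⟩, P, hP, hVP⟩ := exists_isOpen_support_subset hg hfin
  obtain ⟨k, hk⟩ := hV.exists_forall_update_mem hxV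
  have hemb : IsEmbedding fun d : D => g (update x k d) :=
    (hg.isClosedEmbedding hinj).isEmbedding.comp
      ((isEmbedding_update x k).comp OnePoint.isOpenEmbedding_coe.isEmbedding)
  exact not_countable (countable_of_isEmbedding_of_support_subset hemb hP fun d => hVP _ (hk d))

section AlexandroffDuplicate

variable {X : Type*} [TopologicalSpace X]

theorem adTopology_isOpen_singleton_true (x : X) : IsOpen[adTopology X] {(x, true)} := by
  rintro y hy
  simp at hy

theorem adTopology_continuous_mk_false : Continuous[_, adTopology X] fun x => (x, false) :=
  continuous_def.2 fun V hV => isOpen_iff_forall_mem_open.2 fun x hx => by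
    obtain ⟨U, hU, hxU, hUV⟩ := hV x hx
    exact ⟨U, fun y hy => hUV ⟨hy, by simp⟩, hU, hxU⟩

/-- Each nonzero coordinate of `h (x, false)` stays nonzero on a punctured neighbourhood, and
since `x` is not `Gδ`, countably many such neighbourhoods share some `(y, true)`. -/
theorem adTopology_support_finite_of_not_isGδ {Γ Q : Type*} [TopologicalSpace Q] [Zero Q]
    [T1Space Q] {h : X × Bool → Γ → Q} (hh : Continuous[adTopology X, _] h)
    (hiso : ∀ y, (support (h (y, true))).Finite) {x : X} (hx : ¬IsGδ {x}) :
    (support (h (x, false))).Finite := by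
  let _ := adTopology X
  by_contra hinf
  have hnbhd : ∀ γ : support (h (x, false)), ∃ U : Set X, IsOpen U ∧ x ∈ U ∧
      {p : X × Bool | p.1 ∈ U ∧ p ≠ (x, true)} ⊆ {p | h p γ ≠ 0} := fun γ =>
    isOpen_compl_singleton.preimage ((continuous_apply (γ : Γ)).comp hh) x γ.2
  choose U hUopen hxU hUsub using hnbhd
  let e := Set.Infinite.natEmbedding _ hinf
  have hne : ⋂ n, U (e n) ≠ {x} := fun heq => hx (heq ▸ .iInter_of_isOpen fun n => hUopen _)
  obtain ⟨y, hyU, hyx⟩ : ∃ y ∈ ⋂ n, U (e n), y ≠ x := by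
    by_contra! hall
    exact hne (eq_singleton_iff_unique_mem.2 ⟨mem_iInter.2 fun n => hxU _, hall⟩)
  refine Set.infinite_of_injective_forall_mem (f := fun n => (e n : Γ))
    (Subtype.val_injective.comp e.injective) (fun n => ?_) (hiso y)
  exact hUsub (e n) ⟨mem_iInter.1 hyU n, by simpa using hyx⟩

end AlexandroffDuplicate

/-- the Alexandroff duplicate of `A(ω₁)^ω` is not NY-Valdivia. -/
theorem AD_AOmegaOnePowOmega_not_NYValdivia
    (D : Type) [TopologicalSpace D] [DiscreteTopology D]
    (hD : Cardinal.mk D = Cardinal.aleph 1) :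
    ¬ @NYValdivia ((ℕ → OnePoint D) × Bool) (adTopology (ℕ → OnePoint D)) := by
  let _ := adTopology (ℕ → OnePoint D)
  rintro ⟨Γ, h, hemb, hdense⟩
  have : Uncountable D := by
    rw [← not_countable_iff, ← Cardinal.mk_le_aleph0_iff, hD, not_le]
    exact Cardinal.aleph0_lt_aleph_one
  have hiso (y : ℕ → OnePoint D) : (support (h (y, true))).Finite :=
    hemb.isInducing.mem_of_mem_closure_of_isOpen_singleton (adTopology_isOpen_singleton_true y)
      (hdense ⟨_, rfl⟩)
  let cons (y : ℕ → OnePoint D) : ℕ → OnePoint D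
    | 0 => ∞
    | n + 1 => y n
  have hcons : Continuous cons := continuous_pi fun n => by cases n <;> fun_prop
  have hcons_inj : Injective cons := fun y y' hyy' => funext fun n => congrFun hyy' (n + 1)
  obtain ⟨y, hy⟩ := exists_infinite_support_of_continuous_injective
    (hemb.continuous.comp (adTopology_continuous_mk_false.comp hcons))
    (hemb.injective.comp ((Prod.mk_left_injective false).comp hcons_inj))
  exact hy <| adTopology_support_finite_of_not_isGδ hemb.continuous hiso <|
    not_isGδ_singleton_of_not_isGδ_apply 0 OnePoint.not_isGδ_singleton_infty
end

section
/- If a compact Hausdorff space K is the union of countably many compact subspaces each of which is M-scattered, then K is M-scattered. -/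
open Topology Set

universe u v

/-- a compact Hausdorff space which is a countable union of
M-scattered compact subspaces is M-scattered. -/
theorem MScattered_of_countable_union
    (K : Type u) [TopologicalSpace K] [CompactSpace K] [T2Space K]
    (C : ℕ → Set K) (hcomp : ∀ n, IsCompact (C n))
    (hms : ∀ n, MScattered ↥(C n))
    (hcover : ⋃ n, C n = Set.univ) :
    MScattered K := by
  intro A hA
  -- F is the closure of A, a nonempty compact (hence Baire) subspace
  set F : Set K := closure A with hF
  have hAF : A ⊆ F := subset_closure
  have hFcomp : IsCompact F := isClosed_closure.isCompact
  haveI : CompactSpace ↥F := isCompact_iff_compactSpace.mp hFcomp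
  haveI : Nonempty ↥F := ⟨⟨hA.some, hAF hA.some_mem⟩⟩
  -- Baire category: some C n has nonempty interior in F
  have hclosed : ∀ n, IsClosed ((Subtype.val : ↥F → K) ⁻¹' C n) := fun n =>
    ((hcomp n).isClosed).preimage continuous_subtype_val
  have hcUnion : (⋃ n, (Subtype.val : ↥F → K) ⁻¹' C n) = Set.univ := by
    ext x; simp only [Set.mem_iUnion, Set.mem_preimage, Set.mem_univ, iff_true]
    have := Set.mem_univ (x : K); rw [← hcover] at this
    exact Set.mem_iUnion.mp this
  obtain ⟨n, hn⟩ := nonempty_interior_of_iUnion_of_closed hclosed hcUnion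
  -- turn the interior into an open set U₀ of K
  obtain ⟨U₀, hU₀open, hU₀eq⟩ := isOpen_induced_iff.mp
    (isOpen_interior : IsOpen (interior ((Subtype.val : ↥F → K) ⁻¹' C n)))
  have hFU₀sub : F ∩ U₀ ⊆ C n := by
    rintro x ⟨hxF, hxU₀⟩
    have : (⟨x, hxF⟩ : ↥F) ∈ interior ((Subtype.val : ↥F → K) ⁻¹' C n) := by
      rw [← hU₀eq]; exact hxU₀
    have h2 : (⟨x, hxF⟩ : ↥F) ∈ (Subtype.val ⁻¹' C n : Set ↥F) := interior_subset this
    exact h2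
  obtain ⟨x₀, hx₀⟩ := hn
  have hx₀U₀ : (x₀ : K) ∈ U₀ := by rw [← hU₀eq] at hx₀; exact hx₀
  -- apply M-scatteredness of C n to the trace of F ∩ U₀
  set A' : Set ↥(C n) := {x | (x : K) ∈ F ∩ U₀} with hA'
  have hA'ne : A'.Nonempty := by
    refine ⟨⟨x₀, hFU₀sub ⟨x₀.2, hx₀U₀⟩⟩, ?_⟩
    exact ⟨x₀.2, hx₀U₀⟩
  obtain ⟨V, hVopen, hAVne, hAVsc⟩ := hms n A' hA'ne
  obtain ⟨W, hWopen, hWeq⟩ := isOpen_induced_iff.mp hVopen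
  refine ⟨U₀ ∩ W, hU₀open.inter hWopen, ?_, ?_⟩
  · -- nonemptiness: A' ∩ V has a point, whose image lies in closure A ∩ (U₀ ∩ W)
    obtain ⟨z, hzA', hzV⟩ := hAVne
    have hzW : (z : K) ∈ W := by rw [← hWeq] at hzV; exact hzV
    have hzF : (z : K) ∈ F := hzA'.1
    have := mem_closure_iff.mp hzF (U₀ ∩ W) (hU₀open.inter hWopen) ⟨hzA'.2, hzW⟩
    obtain ⟨y, hyU, hyA⟩ := this
    exact ⟨y, hyA, hyU⟩
  · -- second countability: A ∩ (U₀ ∩ W) embeds into A' ∩ V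
    haveI := hAVsc
    have hmem : ∀ x : ↥(A ∩ (U₀ ∩ W)), (x : K) ∈ C n := fun x =>
      hFU₀sub ⟨hAF x.2.1, x.2.2.1⟩
    have hmem2 : ∀ x : ↥(A ∩ (U₀ ∩ W)), (⟨(x : K), hmem x⟩ : ↥(C n)) ∈ A' ∩ V := by
      intro x
      refine ⟨⟨hAF x.2.1, x.2.2.1⟩, ?_⟩
      rw [← hWeq]; exact x.2.2.2
    set g : ↥(A ∩ (U₀ ∩ W)) → ↥(A' ∩ V) := fun x => ⟨⟨(x : K), hmem x⟩, hmem2 x⟩ with hg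
    have hgcont : Continuous g := by
      apply Continuous.subtype_mk; apply Continuous.subtype_mk
      exact continuous_subtype_val
    have hcomp2 : (fun y : ↥(A' ∩ V) => ((y : ↥(C n)) : K)) ∘ g = Subtype.val := rfl
    have hvalemb : Topology.IsEmbedding
        (fun y : ↥(A' ∩ V) => ((y : ↥(C n)) : K)) :=
      Topology.IsEmbedding.subtypeVal.comp Topology.IsEmbedding.subtypeVal
    have hgemb : Topology.IsEmbedding g := by
      apply Topology.IsEmbedding.of_comp hgcont hvalemb.continuous
      rw [hcomp2]; exact Topology.IsEmbedding.subtypeVal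
    exact hgemb.isInducing.secondCountableTopology
end

section
/- Every NY compact space is Eberlein compact: if a compact Hausdorff space K embeds into a σ-product of compact metrizable spaces, then for some set Γ' the space K embeds into c0(Γ') = {x ∈ [0,1]^{Γ'} : for every ε > 0 the set {γ ∈ Γ' : x(γ) > ε} is finite}. -/
open Topology Set

universe u v

lemma exists_nice_embedding {X : Type v} [TopologicalSpace X] [CompactSpace X]
    [TopologicalSpace.MetrizableSpace X] (a : X) :
    ∃ e : X → ℕ → Bool → ℝ,
      (∀ n b, Continuous fun x => e x n b) ∧
      Function.Injective e ∧
      (∀ x n b, e x n b ∈ Set.Icc (0:ℝ) 1) ∧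
      (∀ n b, e a n b = 0) ∧
      (∀ x n b, e x n b ≤ ((n:ℝ)+1)⁻¹) := by
  letI : MetricSpace X := TopologicalSpace.metrizableSpaceMetric X
  haveI : Nonempty X := ⟨a⟩
  set u := TopologicalSpace.denseSeq X with hu
  have hd : DenseRange u := TopologicalSpace.denseRange_denseSeq X
  set m : X → ℕ → ℝ := fun x n => min 1 (dist x (u n)) with hm
  have hm0 : ∀ x n, 0 ≤ m x n := fun x n => le_min zero_le_one dist_nonneg
  have hm1 : ∀ x n, m x n ≤ 1 := fun x n => min_le_left _ _
  refine ⟨fun x n b => ((n:ℝ)+1)⁻¹ * max 0 ((if b then 1 else -1) * (m x n - m a n)),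
    ?_, ?_, ?_, ?_, ?_⟩
  · intro n b
    have : Continuous fun x => m x n := by
      apply Continuous.min continuous_const
      exact Continuous.dist continuous_id continuous_const
    fun_prop
  · intro x y hxy
    have hmin : ∀ n, m x n = m y n := by
      intro n
      have hi : ((n:ℝ)+1)⁻¹ ≠ 0 := by positivity
      have h1 : max 0 (m x n - m a n) = max 0 (m y n - m a n) := by
        have := congrFun (congrFun hxy n) true
        simp only [reduceIte, one_mul] at this
        exact mul_left_cancel₀ hi this
      have h2 : max 0 (-(m x n - m a n)) = max 0 (-(m y n - m a n)) := by
        have := congrFun (congrFun hxy n) false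
        simp only [Bool.false_eq_true, reduceIte, neg_one_mul] at this
        exact mul_left_cancel₀ hi this
      have ix := max_zero_sub_max_neg_zero_eq_self (m x n - m a n)
      have iy := max_zero_sub_max_neg_zero_eq_self (m y n - m a n)
      rw [max_comm (m x n - m a n) 0, max_comm (-(m x n - m a n)) 0] at ix
      rw [max_comm (m y n - m a n) 0, max_comm (-(m y n - m a n)) 0] at iy
      linarith [h1, h2, ix, iy]
    have hxy0 : dist x y ≤ 0 := by
      apply le_of_forall_pos_le_add
      intro ε hε
      obtain ⟨n, hn⟩ := Metric.denseRange_iff.mp hd x (min (ε/2) (1/2))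
        (lt_min (by linarith) (by norm_num))
      have hx1 : dist x (u n) < 1 := lt_of_lt_of_le hn (le_trans (min_le_right _ _) (by norm_num))
      have hmx : m x n = dist x (u n) := min_eq_right hx1.le
      have hy1 : dist y (u n) < 1 := by
        by_contra hc
        push_neg at hc
        have : m y n = 1 := min_eq_left hc
        rw [← hmin n, hmx] at this
        linarith
      have hmy : m y n = dist y (u n) := min_eq_right hy1.le
      have heq : dist y (u n) = dist x (u n) := by rw [← hmy, ← hmin n, hmx]
      have htr : dist x y ≤ dist x (u n) + dist (u n) y := dist_triangle x (u n) y
      have : dist (u n) y = dist y (u n) := dist_comm _ _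
      have hεb : dist x (u n) < ε/2 := lt_of_lt_of_le hn (min_le_left _ _)
      linarith
    exact eq_of_dist_eq_zero (le_antisymm hxy0 dist_nonneg)
  · intro x n b
    constructor
    · positivity
    · have h1 : max 0 ((if b then 1 else -1) * (m x n - m a n)) ≤ 1 := by
        apply max_le zero_le_one
        cases b <;> simp <;> nlinarith [hm0 x n, hm1 x n, hm0 a n, hm1 a n]
      have h2 : ((n:ℝ)+1)⁻¹ ≤ 1 := by
        rw [inv_le_one_iff₀]
        right; linarith [Nat.cast_nonneg (α := ℝ) n]
      calc ((n:ℝ)+1)⁻¹ * max 0 ((if b then 1 else -1) * (m x n - m a n))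
          ≤ 1 * 1 := mul_le_mul h2 h1 (le_max_left _ _) zero_le_one
        _ = 1 := one_mul 1
  · intro n b; simp
  · intro x n b
    have h1 : max 0 ((if b then 1 else -1) * (m x n - m a n)) ≤ 1 := by
      apply max_le zero_le_one
      cases b <;> simp <;> nlinarith [hm0 x n, hm1 x n, hm0 a n, hm1 a n]
    calc ((n:ℝ)+1)⁻¹ * max 0 ((if b then 1 else -1) * (m x n - m a n))
        ≤ ((n:ℝ)+1)⁻¹ * 1 := by
          apply mul_le_mul_of_nonneg_left h1 (by positivity)
      _ = ((n:ℝ)+1)⁻¹ := mul_one _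

/-- every NY compact space is Eberlein compact. -/
theorem eberlein_of_NYCompact
    (K : Type u) [TopologicalSpace K] [CompactSpace K] [T2Space K]
    (h : NYCompact K) :
    EberleinCompact K := by
  obtain ⟨Γ, X, t, hc, hm, a, f, hf, hsupp⟩ := h
  letI : ∀ γ, TopologicalSpace (X γ) := t
  haveI : ∀ γ, CompactSpace (X γ) := hc
  haveI : ∀ γ, TopologicalSpace.MetrizableSpace (X γ) := hm
  choose e hcont hinj hmem hzero hbd using fun γ => exists_nice_embedding (a γ)
  refine ⟨Γ × ℕ × Bool, fun k p => ⟨e p.1 (f k p.1) p.2.1 p.2.2, hmem _ _ _ _⟩, ?_, ?_⟩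
  · have hFc : Continuous fun k (p : Γ × ℕ × Bool) =>
        (⟨e p.1 (f k p.1) p.2.1 p.2.2, hmem _ _ _ _⟩ : unitInterval) := by
      apply continuous_pi
      intro p
      apply Continuous.subtype_mk
      exact (hcont p.1 p.2.1 p.2.2).comp ((continuous_apply p.1).comp hf.continuous)
    have hFi : Function.Injective fun k (p : Γ × ℕ × Bool) =>
        (⟨e p.1 (f k p.1) p.2.1 p.2.2, hmem _ _ _ _⟩ : unitInterval) := by
      intro k k' hkk
      apply hf.injective
      funext γ
      apply hinj γ
      funext n b
      exact congrArg Subtype.val (congrFun hkk (γ, n, b))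
    exact (hFc.isClosedEmbedding hFi).isEmbedding
  · intro k ε hε
    have hsub : {p : Γ × ℕ × Bool | ε < (e p.1 (f k p.1) p.2.1 p.2.2 : ℝ)} ⊆
        {γ | f k γ ≠ a γ} ×ˢ ({n : ℕ | n < ⌈ε⁻¹⌉₊} ×ˢ (Set.univ : Set Bool)) := by
      intro p hp
      simp only [Set.mem_setOf_eq] at hp
      refine Set.mem_prod.mpr ⟨?_, Set.mem_prod.mpr ⟨?_, trivial⟩⟩
      · intro hcontra
        rw [hcontra, hzero p.1] at hp
        linarith
      · rw [Set.mem_setOf_eq, Nat.lt_ceil]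
        have hp2 : ε < ((p.2.1 : ℝ)+1)⁻¹ := lt_of_lt_of_le hp (hbd _ _ _ _)
        have hpos : (0:ℝ) < (p.2.1:ℝ)+1 := by positivity
        have e1 : ε * ε⁻¹ = 1 := mul_inv_cancel₀ hε.ne'
        have e2 : ((p.2.1:ℝ)+1) * ((p.2.1:ℝ)+1)⁻¹ = 1 := mul_inv_cancel₀ hpos.ne'
        nlinarith [mul_lt_mul_of_pos_right hp2 hpos]
    exact Set.Finite.subset ((hsupp k).prod ((Set.finite_lt_nat _).prod Set.finite_univ)) hsub
end
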